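/- Let n ≥ 1 and let a < b be real numbers. Let A ⊆ {x ∈ ℝⁿ : x₁ = a} be a nonempty compact convex set and let V ∈ ℝⁿ with first coordinate V₁ = b. Set C := conv(A ∪ {V}) and, for t ∈ [a, b], set C(t) := C ∩ {x ∈ ℝⁿ : x₁ ≥ t}. Then for all integers ℓ, k with 1 ≤ ℓ ≤ k and every t ∈ [a, b − (ℓ/k)(b − a)], one has #(C(t) ∩ ℤⁿ/k) ≥ min_{x ∈ [−1/2, 1/2]ⁿ} #((C + x) ∩ ℤⁿ/ℓ). -/

import Mathlib

/-!
The homothety with centre `V` and ratio `ℓ/k` maps `C` into `C(t)`: by convexity it stays in `C`,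
and it moves first coordinates `≥ a` to `≥ b - (ℓ/k)(b - a)`. Composed with the translation
by `-x` for a suitable `x ∈ [-1/2, 1/2]ⁿ`, it becomes `y ↦ (ℓ y + r)/k` with `r ∈ ℤⁿ`, which
maps `ℤⁿ/ℓ` injectively into `ℤⁿ/k`. Hence `(C + x) ∩ ℤⁿ/ℓ` injects into `C(t) ∩ ℤⁿ/k`.
-/

open Set Pointwise

/-- The rescaled lattice `ℤⁿ/k` inside `ℝⁿ`. -/
def lpts (n k : ℕ) : Set (EuclideanSpace ℝ (Fin n)) :=
  {x | ∀ i, ∃ m : ℤ, (k : ℝ) * x i = (m : ℝ)}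

/-- The unit cube `[−1/2, 1/2]ⁿ` inside `ℝⁿ`. -/
def unitCube (n : ℕ) : Set (EuclideanSpace ℝ (Fin n)) :=
  {x | ∀ i, |x i| ≤ 1 / 2}

open AffineMap

section

variable {n : ℕ}

theorem Bornology.IsBounded.finite_inter_lpts {k : ℕ} (hk : k ≠ 0)
    {S : Set (EuclideanSpace ℝ (Fin n))} (hS : Bornology.IsBounded S) : (S ∩ lpts n k).Finite := by
  obtain ⟨R, hR⟩ := hS.subset_closedBall 0
  set N : ℤ := ⌈(k : ℝ) * R⌉
  refine ((Set.finite_Icc (fun _ => -N) (fun _ => N)).image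
    fun m : Fin n → ℤ => WithLp.toLp 2 fun i => (m i : ℝ) / k).subset ?_
  rintro y ⟨hyS, hy⟩
  choose m hm using hy
  have hyR : ‖y‖ ≤ R := by simpa using hR hyS
  have hm_le : ∀ i, |m i| ≤ N := fun i => by
    have : |(m i : ℝ)| ≤ N := by
      rw [← hm, abs_mul, Nat.abs_cast]
      exact (mul_le_mul_of_nonneg_left ((PiLp.norm_apply_le y i).trans hyR) k.cast_nonneg).trans
        (Int.le_ceil _)
    exact_mod_cast this
  refine ⟨m, ⟨fun i => (abs_le.mp (hm_le i)).1, fun i => (abs_le.mp (hm_le i)).2⟩, ?_⟩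
  ext i
  simp [← hm, hk]

theorem homothety_apply_coord (V c : EuclideanSpace ℝ (Fin n)) (μ : ℝ) (i : Fin n) :
    homothety V μ c i = μ * c i + (1 - μ) * V i := by
  simp [homothety_apply]; ring

/-- Chosen so that `homothety V (ℓ/k) (y - latticeShift V ℓ k) = (ℓ y + r)/k` with
`r = round ((k - ℓ) V) ∈ ℤⁿ`, and small because `(k - ℓ) V - r` has coordinates in `[-1/2, 1/2]`. -/
noncomputable def latticeShift (V : EuclideanSpace ℝ (Fin n)) (ℓ k : ℕ) :
    EuclideanSpace ℝ (Fin n) :=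
  WithLp.toLp 2 fun i => ((k - ℓ : ℝ) * V i - round ((k - ℓ : ℝ) * V i)) / ℓ

theorem latticeShift_mem_unitCube (V : EuclideanSpace ℝ (Fin n)) {ℓ : ℕ} (hℓ : 1 ≤ ℓ) (k : ℕ) :
    latticeShift V ℓ k ∈ unitCube n := by
  intro i
  have hℓ' : (1 : ℝ) ≤ ℓ := by exact_mod_cast hℓ
  calc |latticeShift V ℓ k i| = |(k - ℓ : ℝ) * V i - round ((k - ℓ : ℝ) * V i)| / ℓ := by
        rw [latticeShift, PiLp.toLp_apply, abs_div, Nat.abs_cast]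
    _ ≤ 1 / 2 / ℓ := by gcongr; exact abs_sub_round _
    _ ≤ 1 / 2 := div_le_self (by norm_num) hℓ'

theorem homothety_sub_latticeShift_apply (V y : EuclideanSpace ℝ (Fin n)) {ℓ k : ℕ}
    (hℓ : ℓ ≠ 0) (hk : k ≠ 0) (i : Fin n) :
    homothety V ((ℓ : ℝ) / k) (y - latticeShift V ℓ k) i =
      (ℓ * y i + round ((k - ℓ : ℝ) * V i)) / k := by
  rw [homothety_apply_coord, PiLp.sub_apply, latticeShift, PiLp.toLp_apply]
  field_simp
  ring

theorem homothety_sub_latticeShift_mem_lpts (V : EuclideanSpace ℝ (Fin n)) {ℓ k : ℕ}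
    (hℓ : ℓ ≠ 0) (hk : k ≠ 0) {y : EuclideanSpace ℝ (Fin n)} (hy : y ∈ lpts n ℓ) :
    homothety V ((ℓ : ℝ) / k) (y - latticeShift V ℓ k) ∈ lpts n k := by
  intro i
  obtain ⟨m, hm⟩ := hy i
  refine ⟨m + round ((k - ℓ : ℝ) * V i), ?_⟩
  rw [homothety_sub_latticeShift_apply V y hℓ hk, mul_div_cancel₀ _ (by exact_mod_cast hk), hm]
  push_cast; rfl

theorem mapsTo_homothety_sub_latticeShift (C : Set (EuclideanSpace ℝ (Fin n)))
    (V : EuclideanSpace ℝ (Fin n)) {ℓ k : ℕ} (hℓ : ℓ ≠ 0) (hk : k ≠ 0) :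
    MapsTo (fun y => homothety V ((ℓ : ℝ) / k) (y - latticeShift V ℓ k))
      ((fun y => y + latticeShift V ℓ k) '' C ∩ lpts n ℓ)
      (homothety V ((ℓ : ℝ) / k) '' C ∩ lpts n k) := by
  rintro _ ⟨⟨c, hc, rfl⟩, hy⟩
  exact ⟨⟨c, hc, by simp⟩, homothety_sub_latticeShift_mem_lpts V hℓ hk hy⟩

theorem injective_homothety_sub (V x : EuclideanSpace ℝ (Fin n)) {μ : ℝ} (hμ : μ ≠ 0) :
    Function.Injective fun y => homothety V μ (y - x) :=
  (homothety_injective V hμ).comp sub_left_injective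

theorem Convex.homothety_mem {E : Type*} [AddCommGroup E] [Module ℝ E] {C : Set E}
    (hC : Convex ℝ C) {V c : E} (hV : V ∈ C) (hc : c ∈ C) {μ : ℝ} (hμ₀ : 0 ≤ μ) (hμ₁ : μ ≤ 1) :
    homothety V μ c ∈ C := by
  rw [homothety_eq_lineMap]
  exact hC.lineMap_mem hV hc ⟨hμ₀, hμ₁⟩

end

theorem stmt8_general (n : ℕ) (hn : 0 < n) (a b : ℝ) (hab : a < b)
    (A : Set (EuclideanSpace ℝ (Fin n))) (hAcp : IsCompact A)
    (hA1 : ∀ x ∈ A, x ⟨0, hn⟩ = a)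
    (V : EuclideanSpace ℝ (Fin n)) (hV : V ⟨0, hn⟩ = b)
    (ℓ k : ℕ) (hℓ : 1 ≤ ℓ) (hℓk : ℓ ≤ k)
    (t : ℝ) (htb : t ≤ b - ((ℓ : ℝ) / (k : ℝ)) * (b - a)) :
    sInf ((fun x => (((fun y => y + x) '' convexHull ℝ (A ∪ {V})) ∩ lpts n ℓ).ncard)
        '' unitCube n)
      ≤ ((convexHull ℝ (A ∪ {V}) ∩ {x : EuclideanSpace ℝ (Fin n) | t ≤ x ⟨0, hn⟩}
          ∩ lpts n k)).ncard := by
  set C := convexHull ℝ (A ∪ {V})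
  set μ : ℝ := ℓ / k
  have hℓ0 : ℓ ≠ 0 := by omega
  have hk0 : k ≠ 0 := by omega
  have hμ₀ : 0 < μ := by positivity
  have hμ₁ : μ ≤ 1 := div_le_one_of_le₀ (by exact_mod_cast hℓk) k.cast_nonneg
  have hVC : V ∈ C := subset_convexHull ℝ _ (Or.inr rfl)
  have hCa : C ⊆ {x | a ≤ x ⟨0, hn⟩} :=
    convexHull_min (union_subset (fun x hx => (hA1 x hx).ge) (by simpa [hV] using hab.le))
      (convex_halfSpace_ge ⟨fun _ _ => rfl, fun _ _ => rfl⟩ a)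
  have himage : homothety V μ '' C ⊆ C ∩ {x | t ≤ x ⟨0, hn⟩} := by
    rintro _ ⟨c, hc, rfl⟩
    refine ⟨(convex_convexHull ℝ _).homothety_mem hVC hc hμ₀.le hμ₁, ?_⟩
    have := hCa hc
    simp only [mem_ofPred_eq, homothety_apply_coord, hV] at this ⊢
    nlinarith
  have hfin : (C ∩ {x | t ≤ x ⟨0, hn⟩} ∩ lpts n k).Finite :=
    ((isBounded_convexHull.2 (hAcp.isBounded.union Bornology.isBounded_singleton)).subset
      inter_subset_left).finite_inter_lpts hk0
  calc sInf ((fun x => ((fun y => y + x) '' C ∩ lpts n ℓ).ncard) '' unitCube n)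
      ≤ ((fun y => y + latticeShift V ℓ k) '' C ∩ lpts n ℓ).ncard :=
        Nat.sInf_le ⟨latticeShift V ℓ k, latticeShift_mem_unitCube V hℓ k, rfl⟩
    _ ≤ _ := ncard_le_ncard_of_injOn _
        (fun y hy => inter_subset_inter_left _ himage
          (mapsTo_homothety_sub_latticeShift C V hℓ0 hk0 hy))
        (injective_homothety_sub V _ hμ₀.ne').injOn hfin

theorem stmt8 (n : ℕ) (hn : 0 < n) (a b : ℝ) (hab : a < b)
    (A : Set (EuclideanSpace ℝ (Fin n))) (hAne : A.Nonempty) (hAcp : IsCompact A)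
    (hAcv : Convex ℝ A) (hA1 : ∀ x ∈ A, x ⟨0, hn⟩ = a)
    (V : EuclideanSpace ℝ (Fin n)) (hV : V ⟨0, hn⟩ = b)
    (ℓ k : ℕ) (hℓ : 1 ≤ ℓ) (hℓk : ℓ ≤ k)
    (t : ℝ) (ht : a ≤ t) (htb : t ≤ b - ((ℓ : ℝ) / (k : ℝ)) * (b - a)) :
    sInf ((fun x => (((fun y => y + x) '' convexHull ℝ (A ∪ {V})) ∩ lpts n ℓ).ncard)
        '' unitCube n)
      ≤ ((convexHull ℝ (A ∪ {V}) ∩ {x : EuclideanSpace ℝ (Fin n) | t ≤ x ⟨0, hn⟩}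
          ∩ lpts n k)).ncard :=
  stmt8_general n hn a b hab A hAcp hA1 V hV ℓ k hℓ hℓk t htb
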